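/- Let k be a positive semidefinite kernel on a set S, let x_1, …, x_t ∈ S and σ > 0, and define K_t, k_t(s), σ_t²(s) and the posterior mean μ_t as in the context. Suppose f : S → ℝ satisfies f(x) = Σ_{j=1}^{m} α_j k(x, z_j) for some points z_1,…,z_m ∈ S and coefficients α ∈ ℝ^m with Σ_{i,j} α_i α_j k(z_i, z_j) ≤ B². Let ε ∈ ℝᵗ be an arbitrary noise vector and set y_i = f(x_i) + ε_i for i = 1,…,t. Then for every x ∈ S, | f(x) − μ_t(x) | ≤ ( B + σ^{−1}·‖ε‖₂ ) · √(σ_t²(x)), where ‖ε‖₂ is the Euclidean norm of ε. -/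

import Mathlib

/-!
Let `w = (K_t + σ²I)⁻¹ k_t(s)`, so that `μ_t(s) = ∑ᵢ wᵢ yᵢ`. In the span of the kernel
sections, with the inner product `⟨k(·,p), k(·,q)⟩ = k(p,q)`, the value `f(s) − ∑ᵢ wᵢ f(xᵢ)`
is the pairing of `f` with the residual `r = k(·,s) − ∑ᵢ wᵢ k(·,xᵢ)`, and the normal equations
`(K_t + σ²I) w = k_t(s)` give `‖r‖² + σ²‖w‖² = σ_t²(s)`. Cauchy–Schwarz for the kernel pairing
bounds `|⟨f, r⟩|` by `B √σ_t²(s)`, and Cauchy–Schwarz in `ℝᵗ` bounds the noise term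
`|∑ᵢ wᵢ εᵢ|` by `‖w‖ ‖ε‖ ≤ σ⁻¹ ‖ε‖ √σ_t²(s)`.
-/

open Matrix

/-- A symmetric positive semidefinite kernel on a set `S`: symmetric, and every finite
Gram matrix is positive semidefinite. -/
def IsPSDKernel {S : Type*} (k : S → S → ℝ) : Prop :=
  (∀ x y, k x y = k y x) ∧
    ∀ (n : ℕ) (x : Fin n → S), (Matrix.of fun i j => k (x i) (x j)).PosSemidef

/-- Regularized Gram matrix `K_t + σ² I`. -/
noncomputable def gramReg {S : Type*} (k : S → S → ℝ) (σ : ℝ) {t : ℕ}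
    (x : Fin t → S) : Matrix (Fin t) (Fin t) ℝ :=
  (Matrix.of fun i j => k (x i) (x j)) + σ ^ 2 • (1 : Matrix (Fin t) (Fin t) ℝ)

/-- Kernel vector `k_t(s) = (k(s,x_1),…,k(s,x_t))ᵀ`. -/
noncomputable def kvec {S : Type*} (k : S → S → ℝ) {t : ℕ} (x : Fin t → S) (s : S) :
    Fin t → ℝ :=
  fun i => k s (x i)

/-- GP posterior variance `σ_t²(s) = k(s,s) − k_t(s)ᵀ(K_t+σ²I)⁻¹k_t(s)`. -/
noncomputable def postVar {S : Type*} (k : S → S → ℝ) (σ : ℝ) {t : ℕ}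
    (x : Fin t → S) (s : S) : ℝ :=
  k s s - kvec k x s ⬝ᵥ ((gramReg k σ x)⁻¹ *ᵥ kvec k x s)

/-- GP posterior mean `μ_t(s) = k_t(s)ᵀ(K_t+σ²I)⁻¹ y` for targets `y`. -/
noncomputable def postMean {S : Type*} (k : S → S → ℝ) (σ : ℝ) {t : ℕ}
    (x : Fin t → S) (y : Fin t → ℝ) (s : S) : ℝ :=
  kvec k x s ⬝ᵥ ((gramReg k σ x)⁻¹ *ᵥ y)

section

variable {S : Type*}

/-- Finitely supported weights `a` stand for the functions `∑ₚ a(p) k(·, p)`; on these the form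
is the RKHS inner product. -/
noncomputable def kernelForm (k : S → S → ℝ) : LinearMap.BilinForm ℝ (S →₀ ℝ) :=
  Finsupp.linearCombination ℝ fun p => Finsupp.linearCombination ℝ (k p)

section KernelForm

variable {k : S → S → ℝ}

@[simp]
lemma kernelForm_single_single (p q : S) (a b : ℝ) :
    kernelForm k (Finsupp.single p a) (Finsupp.single q b) = a * b * k p q := by
  simp [kernelForm]
  ring

lemma kernelForm_sum_single_sum_single {ι κ : Type*} [Fintype ι] [Fintype κ] (p : ι → S)
    (c : ι → ℝ) (q : κ → S) (d : κ → ℝ) :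
    kernelForm k (∑ i, Finsupp.single (p i) (c i)) (∑ j, Finsupp.single (q j) (d j))
      = ∑ i, ∑ j, c i * d j * k (p i) (q j) := by
  simp only [map_sum, LinearMap.sum_apply, kernelForm_single_single]
  exact Finset.sum_comm

lemma kernelForm_apply (a b : S →₀ ℝ) :
    kernelForm k a b = a.sum fun p c => b.sum fun q d => c * d * k p q := by
  simp [kernelForm, Finsupp.linearCombination_apply, Finsupp.sum, Finset.mul_sum, mul_assoc]

lemma isSymm_kernelForm (hk : ∀ p q, k p q = k q p) : LinearMap.IsSymm (kernelForm k) := by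
  refine LinearMap.isSymm_iff_eq_flip.2 ?_
  ext p q
  simp [hk]

lemma IsPSDKernel.posSemidef_gram (hk : IsPSDKernel k) {ι : Type*} [Fintype ι] (p : ι → S) :
    (Matrix.of fun i j => k (p i) (p j)).PosSemidef := by
  let e := Fintype.equivFin ι
  convert (hk.2 _ (p ∘ e.symm)).submatrix e
  ext i j
  simp

lemma IsPSDKernel.kernelForm_self_nonneg (hk : IsPSDKernel k) (a : S →₀ ℝ) :
    0 ≤ kernelForm k a a := by
  have h := (hk.posSemidef_gram (fun p : a.support => (p : S))).dotProduct_mulVec_nonneg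
    fun p => a p
  refine h.trans_eq ?_
  simp only [kernelForm_apply, Finsupp.sum, ← Finset.sum_coe_sort a.support, dotProduct,
    mulVec, Finset.mul_sum, star_trivial, of_apply]
  exact Finset.sum_congr rfl fun _ _ => Finset.sum_congr rfl fun _ _ => by ring

lemma IsPSDKernel.abs_kernelForm_le (hk : IsPSDKernel k) (a b : S →₀ ℝ) :
    |kernelForm k a b| ≤ √(kernelForm k a a) * √(kernelForm k b b) := by
  rw [← Real.sqrt_mul (hk.kernelForm_self_nonneg a)]
  exact Real.abs_le_sqrt <| LinearMap.BilinForm.apply_sq_le_of_symm _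
    hk.kernelForm_self_nonneg (isSymm_kernelForm hk.1) a b

end KernelForm

lemma abs_dotProduct_le_sqrt_mul_sqrt {ι : Type*} [Fintype ι] (u v : ι → ℝ) :
    |u ⬝ᵥ v| ≤ √(∑ i, u i ^ 2) * √(∑ i, v i ^ 2) := by
  rw [← Real.sqrt_mul (by positivity)]
  exact Real.abs_le_sqrt (Finset.sum_mul_sq_le_sq_mul_sq _ u v)

noncomputable def postWeights (k : S → S → ℝ) (σ : ℝ) {t : ℕ} (x : Fin t → S) (s : S) :
    Fin t → ℝ :=
  (gramReg k σ x)⁻¹ *ᵥ kvec k x s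

noncomputable def postResidual (k : S → S → ℝ) (σ : ℝ) {t : ℕ} (x : Fin t → S) (s : S) :
    S →₀ ℝ :=
  Finsupp.single s 1 - ∑ i, Finsupp.single (x i) (postWeights k σ x s i)

section Posterior

variable {k : S → S → ℝ} {σ : ℝ} {t : ℕ} (x : Fin t → S)

lemma gramReg_posDef (hk : IsPSDKernel k) (hσ : σ ≠ 0) : (gramReg k σ x).PosDef :=
  PosDef.posSemidef_add (hk.2 t x) (PosDef.one.smul (by positivity))

lemma gramReg_isSymm (hk : ∀ p q, k p q = k q p) : (gramReg k σ x).IsSymm := by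
  ext i j
  simp [gramReg, hk (x i), one_apply, eq_comm]

lemma postMean_eq_postWeights_dotProduct (hk : ∀ p q, k p q = k q p) (y : Fin t → ℝ) (s : S) :
    postMean k σ x y s = postWeights k σ x s ⬝ᵥ y := by
  rw [postMean, dotProduct_mulVec, ← mulVec_transpose, (gramReg_isSymm x hk).inv.eq]
  rfl

lemma gram_mulVec_postWeights (hk : IsPSDKernel k) (hσ : σ ≠ 0) (s : S) :
    (Matrix.of fun i j => k (x i) (x j)) *ᵥ postWeights k σ x s
      = kvec k x s - σ ^ 2 • postWeights k σ x s := by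
  have h : gramReg k σ x *ᵥ postWeights k σ x s = kvec k x s := by
    rw [postWeights, mulVec_mulVec,
      mul_nonsing_inv _ (gramReg_posDef x hk hσ).det_pos.ne'.isUnit, one_mulVec]
  rw [← h, gramReg, add_mulVec, smul_mulVec, one_mulVec, add_sub_cancel_right]

lemma kernelForm_postResidual_self (hk : IsPSDKernel k) (hσ : σ ≠ 0) (s : S) :
    kernelForm k (postResidual k σ x s) (postResidual k σ x s)
      = postVar k σ x s - σ ^ 2 * ∑ i, postWeights k σ x s i ^ 2 := by
  rw [postVar, ← postWeights]
  set w := postWeights k σ x s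
  set u := ∑ i, Finsupp.single (x i) (w i)
  have hsu : kernelForm k (Finsupp.single s 1) u = kvec k x s ⬝ᵥ w := by
    simp [u, map_sum, dotProduct, kvec, mul_comm]
  have hus : kernelForm k u (Finsupp.single s 1) = kvec k x s ⬝ᵥ w := by
    rw [← (isSymm_kernelForm hk.1).eq, RingHom.id_apply, hsu]
  have huu : kernelForm k u u = w ⬝ᵥ ((Matrix.of fun i j => k (x i) (x j)) *ᵥ w) := by
    rw [kernelForm_sum_single_sum_single]
    simp only [dotProduct, mulVec, of_apply, Finset.mul_sum]
    exact Finset.sum_congr rfl fun _ _ => Finset.sum_congr rfl fun _ _ => by ring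
  simp only [postResidual, map_sub, LinearMap.sub_apply]
  have hKw : (Matrix.of fun i j => k (x i) (x j)) *ᵥ w = kvec k x s - σ ^ 2 • w :=
    gram_mulVec_postWeights x hk hσ s
  rw [hsu, hus, huu, hKw, dotProduct_sub, dotProduct_smul, dotProduct_comm w, smul_eq_mul,
    kernelForm_single_single]
  simp only [dotProduct, sq]
  ring

lemma kernelForm_postResidual_self_le (hk : IsPSDKernel k) (hσ : σ ≠ 0) (s : S) :
    kernelForm k (postResidual k σ x s) (postResidual k σ x s) ≤ postVar k σ x s := by
  rw [kernelForm_postResidual_self x hk hσ]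
  have : 0 ≤ σ ^ 2 * ∑ i, postWeights k σ x s i ^ 2 := by positivity
  linarith

lemma sqrt_sum_postWeights_sq_le (hk : IsPSDKernel k) (hσ : 0 < σ) (s : S) :
    √(∑ i, postWeights k σ x s i ^ 2) ≤ σ⁻¹ * √(postVar k σ x s) := by
  have hσw : σ * √(∑ i, postWeights k σ x s i ^ 2)
      = √(σ ^ 2 * ∑ i, postWeights k σ x s i ^ 2) := by
    rw [Real.sqrt_mul (sq_nonneg σ), Real.sqrt_sq hσ.le]
  rw [le_inv_mul_iff₀ hσ, hσw]
  refine Real.sqrt_le_sqrt ?_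
  have := hk.kernelForm_self_nonneg (postResidual k σ x s)
  rw [kernelForm_postResidual_self x hk hσ.ne'] at this
  linarith

lemma sub_postMean_eq (hk : ∀ p q, k p q = k q p) {f : S → ℝ} (g : S →₀ ℝ)
    (hf : ∀ s, f s = kernelForm k (Finsupp.single s 1) g) {y ε : Fin t → ℝ}
    (hy : ∀ i, y i = f (x i) + ε i) (s : S) :
    f s - postMean k σ x y s
      = kernelForm k (postResidual k σ x s) g - postWeights k σ x s ⬝ᵥ ε := by
  rw [postMean_eq_postWeights_dotProduct x hk, show y = (fun i => f (x i)) + ε from funext hy,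
    dotProduct_add, postResidual]
  have hx : ∀ i, kernelForm k (Finsupp.single (x i) (postWeights k σ x s i)) g
      = postWeights k σ x s i * f (x i) := fun i => by
    rw [hf, ← Finsupp.smul_single_one, map_smul, LinearMap.smul_apply, smul_eq_mul]
  simp only [map_sub, map_sum, LinearMap.sub_apply, LinearMap.sum_apply, hx, ← hf, dotProduct]
  ring

end Posterior

end

/-- Deterministic GP concentration: if `f` is a finite combination of
kernel sections with kernel norm at most `B` and the targets are `y_i = f(x_i) + ε_i`,
then `|f(x) − μ_t(x)| ≤ (B + σ⁻¹‖ε‖₂)·√(σ_t²(x))`. -/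
theorem stmt16 {S : Type*} (k : S → S → ℝ) (hk : IsPSDKernel k)
    (σ : ℝ) (hσ : 0 < σ) (t : ℕ) (x : Fin t → S)
    (f : S → ℝ) (m : ℕ) (z : Fin m → S) (α : Fin m → ℝ) (B : ℝ) (hB : 0 ≤ B)
    (hf : ∀ s : S, f s = ∑ j : Fin m, α j * k s (z j))
    (hnorm : ∑ i : Fin m, ∑ j : Fin m, α i * α j * k (z i) (z j) ≤ B ^ 2)
    (ε : Fin t → ℝ) (y : Fin t → ℝ) (hy : ∀ i, y i = f (x i) + ε i) :
    ∀ s : S, |f s - postMean k σ x y s|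
      ≤ (B + σ⁻¹ * Real.sqrt (∑ i : Fin t, ε i ^ 2)) * Real.sqrt (postVar k σ x s) := by
  intro s
  set g : S →₀ ℝ := ∑ j, Finsupp.single (z j) (α j)
  have hfg : ∀ s', f s' = kernelForm k (Finsupp.single s' 1) g := by
    simp [g, hf, map_sum]
  have hgg : kernelForm k g g ≤ B ^ 2 := by
    rwa [kernelForm_sum_single_sum_single]
  have hg : √(kernelForm k g g) ≤ B := Real.sqrt_le_iff.2 ⟨hB, hgg⟩
  set r := postResidual k σ x s
  set w := postWeights k σ x s
  rw [sub_postMean_eq x hk.1 g hfg hy s]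
  calc |kernelForm k r g - w ⬝ᵥ ε|
      ≤ |kernelForm k r g| + |w ⬝ᵥ ε| := abs_sub _ _
    _ ≤ √(kernelForm k r r) * √(kernelForm k g g) + √(∑ i, w i ^ 2) * √(∑ i, ε i ^ 2) :=
      add_le_add (hk.abs_kernelForm_le r g) (abs_dotProduct_le_sqrt_mul_sqrt w ε)
    _ ≤ √(postVar k σ x s) * B + σ⁻¹ * √(postVar k σ x s) * √(∑ i, ε i ^ 2) := by
      gcongr
      · exact kernelForm_postResidual_self_le x hk hσ.ne' s
      · exact sqrt_sum_postWeights_sq_le x hk hσ s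
    _ = (B + σ⁻¹ * √(∑ i, ε i ^ 2)) * √(postVar k σ x s) := by ring
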